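/- The complex cotangent cot is a holomorphic bijection from the strip S = {θ ∈ ℂ : 0 < Re θ < π} onto ℂ \ ((−i∞, −i] ∪ [i, i∞)), i.e., the plane minus the two closed imaginary rays {it : t ∈ ℝ, |t| ≥ 1}. -/

import Mathlib

/-- The open strip `0 < Re θ < π`. -/
def stripS : Set ℂ := {θ : ℂ | 0 < θ.re ∧ θ.re < Real.pi}

/-- The plane minus the two closed imaginary rays `{it : t ∈ ℝ, |t| ≥ 1}`. -/
def slitImag : Set ℂ := {w : ℂ | ∃ t : ℝ, 1 ≤ |t| ∧ w = (t : ℂ) * Complex.I}ᶜ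

/-!
Since `cot θ = tan (π / 2 - θ)`, it is enough to show that `tan` maps the strip `|Re z| < π / 2`
bijectively onto the slit plane. On that strip `tan` is inverted by
`arctan w = -(i / 2) log ((1 + w i) / (1 - w i))`, which is also a right inverse of `tan` away
from `± i`. As `Re (arctan w) = arg ((1 + w i) / (1 - w i)) / 2`, the point `arctan w` falls
inside the strip exactly when this Cayley quotient is not a negative real, that is, exactly when
`w` is off the two rays.
-/

open Complex Set
open scoped Real

def tanStrip : Set ℂ := {z : ℂ | z.re ∈ Ioo (-(π / 2)) (π / 2)}

lemma Complex.cot_eq_tan_pi_div_two_sub (θ : ℂ) : cot θ = tan (π / 2 - θ) := by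
  rw [cot_eq_cos_div_sin, tan_eq_sin_div_cos, sin_pi_div_two_sub, cos_pi_div_two_sub]

lemma Complex.tan_sq_ne_neg_one (z : ℂ) : tan z ^ 2 ≠ -1 := by
  intro h
  by_cases hcos : cos z = 0
  · simp [tan_eq_sin_div_cos, hcos] at h
  · rw [tan_eq_sin_div_cos, div_pow, div_eq_iff (pow_ne_zero 2 hcos)] at h
    have := sin_sq_add_cos_sq z
    rw [h] at this
    simp at this

lemma Complex.re_arctan (w : ℂ) : (arctan w).re = arg ((1 + w * I) / (1 - w * I)) / 2 := by
  simp [arctan, log_re, log_im]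
  ring

lemma image_pi_div_two_sub_stripS : (fun θ : ℂ => π / 2 - θ) '' stripS = tanStrip := by
  have h : Function.Involutive fun θ : ℂ => π / 2 - θ := sub_sub_cancel _
  rw [image_eq_preimage_of_inverse h.leftInverse h.rightInverse]
  ext z
  simp only [stripS, tanStrip, mem_preimage, mem_ofPred_eq, mem_Ioo, sub_re, div_ofNat_re,
    ofReal_re]
  constructor <;> rintro ⟨h₁, h₂⟩ <;> constructor <;> linarith

lemma ne_pi_div_two_of_mem_tanStrip {z : ℂ} (hz : z ∈ tanStrip) : z ≠ π / 2 := by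
  rintro rfl
  simpa using hz.2

lemma arctan_tan_of_mem_tanStrip {z : ℂ} (hz : z ∈ tanStrip) : arctan (tan z) = z :=
  arctan_tan (ne_pi_div_two_of_mem_tanStrip hz) hz.1 hz.2.le

lemma differentiableOn_tan_tanStrip : DifferentiableOn ℂ tan tanStrip := fun _ hz =>
  (differentiableAt_tan.mpr <| cos_ne_zero_of_arctan_bounds
    (ne_pi_div_two_of_mem_tanStrip hz) hz.1 hz.2.le).differentiableWithinAt

lemma injOn_tan_tanStrip : InjOn tan tanStrip :=
  LeftInvOn.injOn (f₁' := arctan) fun _ => arctan_tan_of_mem_tanStrip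

lemma arctan_mem_tanStrip_iff {w : ℂ} :
    arctan w ∈ tanStrip ↔ arg ((1 + w * I) / (1 - w * I)) ≠ π := by
  have h₁ := neg_pi_lt_arg ((1 + w * I) / (1 - w * I))
  have h₂ := arg_le_pi ((1 + w * I) / (1 - w * I))
  simp only [tanStrip, mem_ofPred_eq, mem_Ioo, re_arctan]
  constructor
  · rintro ⟨-, h⟩ h'
    rw [h'] at h
    linarith
  · intro h
    have := lt_of_le_of_ne h₂ h
    constructor <;> linarith

lemma arg_eq_pi_iff_notMem_slitImag {w : ℂ} (h₁ : w ≠ I) (h₂ : w ≠ -I) :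
    arg ((1 + w * I) / (1 - w * I)) = π ↔ w ∉ slitImag := by
  have hden : 1 - w * I ≠ 0 := fun h => h₂ (by linear_combination I * h + w * I_sq)
  simp only [slitImag, mem_compl_iff, mem_ofPred_eq, not_not, arg_eq_pi_iff]
  constructor
  · rintro ⟨hre, him⟩
    set r := ((1 + w * I) / (1 - w * I)).re
    have hq : (1 + w * I) / (1 - w * I) = r := ext rfl (by simpa using him)
    rw [div_eq_iff hden] at hq
    have hr : (1 : ℂ) + r ≠ 0 := by
      intro h
      have : (2 : ℂ) = 0 := by linear_combination hq + (1 - w * I) * h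
      norm_num at this
    -- `w = i (1 - q) / (1 + q)` inverts the Cayley quotient `q`
    refine ⟨(1 - r) / (1 + r), ?_, ?_⟩
    · rw [abs_div, one_le_div (abs_pos.mpr (by exact_mod_cast hr))]
      exact abs_le_abs (by linarith) (by linarith)
    · push_cast
      rw [div_mul_eq_mul_div, eq_div_iff hr]
      linear_combination (-I) * hq + (w * r + w) * I_sq
  · rintro ⟨t, ht, rfl⟩
    have hq : (1 + t * I * I) / (1 - t * I * I) = ((1 - t) / (1 + t) : ℝ) := by
      push_cast
      rw [mul_assoc, I_mul_I]
      ring_nf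
    rw [hq, ofReal_re, ofReal_im]
    refine ⟨?_, rfl⟩
    have ht₁ : t ≠ 1 := by rintro rfl; simp at h₁
    have ht₂ : t ≠ -1 := by rintro rfl; simp at h₂
    rcases le_abs'.mp ht with h | h
    · exact div_neg_of_pos_of_neg (by linarith) (by linarith [lt_of_le_of_ne h ht₂])
    · exact div_neg_of_neg_of_pos (by linarith [lt_of_le_of_ne h (Ne.symm ht₁)]) (by linarith)

lemma arctan_mem_tanStrip_iff_mem_slitImag {w : ℂ} (h₁ : w ≠ I) (h₂ : w ≠ -I) :
    arctan w ∈ tanStrip ↔ w ∈ slitImag := by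
  rw [arctan_mem_tanStrip_iff, ne_eq, arg_eq_pi_iff_notMem_slitImag h₁ h₂, not_not]

lemma image_tan_tanStrip : tan '' tanStrip = slitImag := by
  ext w
  constructor
  · rintro ⟨z, hz, rfl⟩
    have hI : tan z ≠ I := fun h => tan_sq_ne_neg_one z (by rw [h, I_sq])
    have hnegI : tan z ≠ -I := fun h => tan_sq_ne_neg_one z (by rw [h, neg_sq, I_sq])
    rw [← arctan_mem_tanStrip_iff_mem_slitImag hI hnegI, arctan_tan_of_mem_tanStrip hz]
    exact hz
  · intro hw
    have hI : w ≠ I := fun h => hw ⟨1, by simp, by simp [h]⟩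
    have hnegI : w ≠ -I := fun h => hw ⟨-1, by simp, by simp [h]⟩
    exact ⟨arctan w, (arctan_mem_tanStrip_iff_mem_slitImag hI hnegI).2 hw, tan_arctan hI hnegI⟩

theorem cot_conformal_strip :
    DifferentiableOn ℂ Complex.cot stripS ∧
    Set.InjOn Complex.cot stripS ∧
    Complex.cot '' stripS = slitImag := by
  have hcot : cot = tan ∘ fun θ : ℂ => π / 2 - θ := funext cot_eq_tan_pi_div_two_sub
  have hmaps : MapsTo (fun θ : ℂ => π / 2 - θ) stripS tanStrip :=
    image_pi_div_two_sub_stripS ▸ mapsTo_image _ _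
  rw [hcot]
  refine ⟨differentiableOn_tan_tanStrip.comp (by fun_prop) hmaps,
    injOn_tan_tanStrip.comp sub_right_injective.injOn hmaps, ?_⟩
  rw [image_comp, image_pi_div_two_sub_stripS, image_tan_tanStrip]
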